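/- arXiv:2603.17059 — 3 statements merged into one kernel-verified Lean document; each statement's English description precedes it below -/
import Mathlib

section
/- Let T be a bounded linear operator on a complex Hilbert space H that admits an A-adjoint (where A is a positive operator with dim R(A) ≥ 2), suppose T is A-self-adjoint (i.e., AT is self-adjoint), and let q be a complex number with |q| ≤ 1. Then |q|·w_A(T) ≤ w_{q,A}(T) ≤ w_A(T), where w_{q,A}(T) = sup{|⟨Tx,y⟩_A| : ‖x‖_A = ‖y‖_A = 1, ⟨x,y⟩_A = q} and w_A(T) = w_{1,A}(T). -/
open scoped InnerProductSpace

variable {H : Type*} [NormedAddCommGroup H] [InnerProductSpace ℂ H] [CompleteSpace H]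

/-- The semi-inner product induced by `A`: `⟨x,y⟩_A = ⟨Ax,y⟩`
(linear in the first argument, as in the paper). -/
noncomputable def sip (A : H →L[ℂ] H) (x y : H) : ℂ := @inner ℂ H _ y (A x)

/-- The seminorm induced by `A`. -/
noncomputable def normA (A : H →L[ℂ] H) (x : H) : ℝ := Real.sqrt (sip A x x).re

/-- The `A`-`q`-numerical radius of `T`. -/
noncomputable def wqA (A T : H →L[ℂ] H) (q : ℂ) : ℝ :=
  sSup {r : ℝ | ∃ x y : H, normA A x = 1 ∧ normA A y = 1 ∧ sip A x y = q ∧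
    r = ‖sip A (T x) y‖}

/-- The `A`-operator seminorm of `T`. -/
noncomputable def opNormA (A T : H →L[ℂ] H) : ℝ :=
  sSup {r : ℝ | ∃ x ∈ closure (Set.range fun v => A v), x ≠ 0 ∧ r = normA A (T x) / normA A x}

/-!
For `A`-self-adjoint `T` the upper bound is the classical polarization argument: the bound
`|⟨Tu,u⟩_A| ≤ w_A(T) ‖u‖_A²` together with the parallelogram law gives `|⟨Tx,y⟩_A| ≤ w_A(T)` for all
`A`-unit vectors `x, y`, whatever `⟨x,y⟩_A` is. Here `w_A(T) = w_{1,A}(T)` is the usual `A`-numerical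
radius, because `⟨x,y⟩_A = 1` forces `‖y - x‖_A = 0`.

For the lower bound, fix an `A`-unit `x` and choose an `A`-unit `e` that is `A`-orthogonal to `x`, which
is possible because `dim R(A) ≥ 2`. The two vectors `y± = q̄ x ± √(1 - |q|²) e` are `A`-unit with
`⟨x,y±⟩_A = q`, and `⟨Tx,y₊⟩_A + ⟨Tx,y₋⟩_A = 2q⟨Tx,x⟩_A`.

The suprema involved are of bounded sets (otherwise `sSup` would be `0`) because
`‖Tx‖_A ≤ ‖T‖ ‖x‖_A`, which follows from the power trick `‖Tⁿx‖_A² ≤ ‖x‖_A ‖T²ⁿx‖_A`. Writing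
`A = B*B` turns the semi-inner product into `⟨Bx, By⟩`, so Cauchy–Schwarz and the parallelogram law
come from `H`.
-/

set_option linter.unusedSectionVars false

open ContinuousLinearMap Filter Topology

lemma le_of_forall_pow_two_pow_le {r L K : ℝ} (hL : 0 ≤ L)
    (h : ∀ k : ℕ, r ^ 2 ^ k ≤ K * L ^ 2 ^ k) : r ≤ L := by
  by_contra! hLr
  have hr : 0 < r := hL.trans_lt hLr
  have hlim : Tendsto (fun k : ℕ => K * (L / r) ^ 2 ^ k) atTop (𝓝 0) := by
    simpa using ((tendsto_pow_atTop_nhds_zero_of_lt_one (by positivity)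
      ((div_lt_one hr).2 hLr)).comp (tendsto_pow_atTop_atTop_of_one_lt one_lt_two)).const_mul K
  obtain ⟨k, hk⟩ := (hlim.eventually (gt_mem_nhds one_pos)).exists
  have hrk : 0 < r ^ 2 ^ k := by positivity
  rw [div_pow, ← mul_div_assoc, div_lt_one hrk] at hk
  exact (h k).not_gt hk

/-- The power trick, applied in `normA_apply_le` to `a n = ‖Tⁿx‖_A` and `L = ‖T‖`. -/
lemma le_mul_of_sq_le_mul_double {a : ℕ → ℝ} {C L : ℝ} (ha : ∀ n, 0 ≤ a n) (hL : 0 ≤ L)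
    (hsq : ∀ n, a n ^ 2 ≤ a 0 * a (2 * n)) (hC : ∀ n, a n ≤ C * L ^ n) : a 1 ≤ L * a 0 := by
  rcases (ha 0).eq_or_lt with h0 | h0
  · have := hsq 1
    rw [← h0, zero_mul] at this
    rw [← h0, mul_zero]
    nlinarith [ha 1]
  · rw [← div_le_iff₀ h0]
    have hiter : ∀ k : ℕ, (a 1 / a 0) ^ 2 ^ k ≤ a (2 ^ k) / a 0 := by
      intro k
      induction k with
      | zero => simp
      | succ k ih =>
        have hbase : 0 ≤ (a 1 / a 0) ^ 2 ^ k := by have := ha 1; positivity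
        calc (a 1 / a 0) ^ 2 ^ (k + 1) = ((a 1 / a 0) ^ 2 ^ k) ^ 2 := by ring
          _ ≤ (a (2 ^ k) / a 0) ^ 2 := by gcongr
          _ ≤ a (2 ^ (k + 1)) / a 0 := by
            rw [div_pow, div_le_div_iff₀ (by positivity) h0, pow_succ' 2 k]
            nlinarith [hsq (2 ^ k)]
    refine le_of_forall_pow_two_pow_le hL (K := C / a 0) fun k => ?_
    calc (a 1 / a 0) ^ 2 ^ k ≤ a (2 ^ k) / a 0 := hiter k
      _ ≤ C * L ^ 2 ^ k / a 0 := by gcongr; exact hC _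
      _ = C / a 0 * L ^ 2 ^ k := by ring

section SemiInner

variable (A : H →L[ℂ] H)

@[simp] lemma sip_add_left (x x' y : H) : sip A (x + x') y = sip A x y + sip A x' y := by
  simp [sip]

@[simp] lemma sip_add_right (x y y' : H) : sip A x (y + y') = sip A x y + sip A x y' := by
  simp [sip]

@[simp] lemma sip_sub_left (x x' y : H) : sip A (x - x') y = sip A x y - sip A x' y := by
  simp [sip]

@[simp] lemma sip_sub_right (x y y' : H) : sip A x (y - y') = sip A x y - sip A x y' := by
  simp [sip]

@[simp] lemma sip_smul_left (c : ℂ) (x y : H) : sip A (c • x) y = c * sip A x y := by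
  simp [sip]

@[simp] lemma sip_smul_right (c : ℂ) (x y : H) :
    sip A x (c • y) = starRingEnd ℂ c * sip A x y := by
  simp [sip, mul_comm]

lemma normA_nonneg (x : H) : 0 ≤ normA A x := Real.sqrt_nonneg _

lemma sip_star_mul_self (B : H →L[ℂ] H) (x y : H) : sip (star B * B) x y = ⟪B y, B x⟫_ℂ := by
  simp [sip, star_eq_adjoint, adjoint_inner_right]

lemma normA_star_mul_self (B : H →L[ℂ] H) (x : H) : normA (star B * B) x = ‖B x‖ := by
  rw [normA, sip_star_mul_self, inner_self_eq_norm_sq_to_K]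
  norm_cast
  exact Real.sqrt_sq (norm_nonneg _)

end SemiInner

section Positive

variable {A : H →L[ℂ] H}

lemma ContinuousLinearMap.IsPositive.exists_eq_star_mul_self (hA : A.IsPositive) :
    ∃ B : H →L[ℂ] H, A = star B * B :=
  CStarAlgebra.nonneg_iff_eq_star_mul_self.mp ((nonneg_iff_isPositive A).mpr hA)

lemma sip_conj (hA : A.IsPositive) (x y : H) : starRingEnd ℂ (sip A x y) = sip A y x := by
  obtain ⟨B, rfl⟩ := hA.exists_eq_star_mul_self
  simp only [sip_star_mul_self, inner_conj_symm]

lemma sip_self (hA : A.IsPositive) (x : H) : sip A x x = ((normA A x ^ 2 : ℝ) : ℂ) := by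
  obtain ⟨B, rfl⟩ := hA.exists_eq_star_mul_self
  rw [sip_star_mul_self, normA_star_mul_self, inner_self_eq_norm_sq_to_K]
  push_cast
  rfl

lemma sip_self_eq_one (hA : A.IsPositive) {x : H} (hx : normA A x = 1) : sip A x x = 1 := by
  simp [sip_self hA, hx]

lemma norm_sip_le (hA : A.IsPositive) (x y : H) : ‖sip A x y‖ ≤ normA A x * normA A y := by
  obtain ⟨B, rfl⟩ := hA.exists_eq_star_mul_self
  simpa only [sip_star_mul_self, normA_star_mul_self, mul_comm] using norm_inner_le_norm (B y) (B x)

lemma normA_smul (hA : A.IsPositive) (c : ℂ) (x : H) : normA A (c • x) = ‖c‖ * normA A x := by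
  obtain ⟨B, rfl⟩ := hA.exists_eq_star_mul_self
  simp only [normA_star_mul_self, map_smul, norm_smul]

lemma normA_add_sq_add_normA_sub_sq (hA : A.IsPositive) (u v : H) :
    normA A (u + v) ^ 2 + normA A (u - v) ^ 2 = 2 * (normA A u ^ 2 + normA A v ^ 2) := by
  obtain ⟨B, rfl⟩ := hA.exists_eq_star_mul_self
  simp only [normA_star_mul_self, map_add, map_sub]
  have := parallelogram_law_with_norm ℂ (B u) (B v)
  linear_combination this

lemma apply_eq_zero_of_normA_eq_zero (hA : A.IsPositive) {x : H} (hx : normA A x = 0) :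
    A x = 0 := by
  obtain ⟨B, rfl⟩ := hA.exists_eq_star_mul_self
  rw [normA_star_mul_self, norm_eq_zero] at hx
  simp [hx]

lemma sip_right_eq_of_sip_eq_one (hA : A.IsPositive) {x y : H} (hx : normA A x = 1)
    (hy : normA A y = 1) (hxy : sip A x y = 1) (z : H) : sip A z y = sip A z x := by
  have hyx : sip A y x = 1 := by rw [← sip_conj hA, hxy, map_one]
  have hnull : normA A (y - x) = 0 := by
    simp [normA, hxy, hyx, sip_self_eq_one hA hx, sip_self_eq_one hA hy]
  have := norm_sip_le hA z (y - x)
  rw [hnull, mul_zero, norm_le_zero_iff, sip_sub_right, sub_eq_zero] at this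
  exact this

lemma exists_apply_ne_smul (hrank : 2 ≤ Module.rank ℂ (LinearMap.range (A : H →ₗ[ℂ] H)))
    (x : H) : ∃ v : H, ∀ c : ℂ, A v ≠ c • A x := by
  by_contra! hcon
  have hle : Module.rank ℂ (LinearMap.range (A : H →ₗ[ℂ] H)) ≤ 1 := by
    rw [rank_le_one_iff]
    refine ⟨⟨A x, LinearMap.mem_range_self _ x⟩, ?_⟩
    rintro ⟨_, v, rfl⟩
    obtain ⟨c, hc⟩ := hcon v
    exact ⟨c, Subtype.ext (by simpa using hc.symm)⟩
  exact absurd (hrank.trans hle) (by norm_num)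

/-- Gram–Schmidt against `x`, using a vector whose image under `A` is not parallel to `A x`. -/
lemma exists_normA_eq_one_sip_eq_zero (hA : A.IsPositive)
    (hrank : 2 ≤ Module.rank ℂ (LinearMap.range (A : H →ₗ[ℂ] H))) {x : H} (hx : normA A x = 1) :
    ∃ e : H, normA A e = 1 ∧ sip A e x = 0 := by
  obtain ⟨v, hv⟩ := exists_apply_ne_smul hrank x
  set w := v - sip A v x • x
  have hwx : sip A w x = 0 := by simp [w, sip_self_eq_one hA hx]
  have hw : 0 < normA A w := by
    refine (normA_nonneg A w).lt_of_ne fun h => hv (sip A v x) ?_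
    have := apply_eq_zero_of_normA_eq_zero hA h.symm
    rwa [map_sub, map_smul, sub_eq_zero] at this
  refine ⟨((normA A w)⁻¹ : ℝ) • w, ?_, ?_⟩
  · rw [← Complex.coe_smul, normA_smul hA]
    simp [abs_of_pos hw, hw.ne']
  · rw [← Complex.coe_smul, sip_smul_left, hwx, mul_zero]

lemma normA_eq_one_and_sip_eq (hA : A.IsPositive) {x e : H} (hx : normA A x = 1)
    (he : normA A e = 1) (hex : sip A e x = 0) {q : ℂ} {s : ℝ} (hs : s ^ 2 = 1 - ‖q‖ ^ 2) :
    normA A (starRingEnd ℂ q • x + (s : ℂ) • e) = 1 ∧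
      sip A x (starRingEnd ℂ q • x + (s : ℂ) • e) = q := by
  have hxe : sip A x e = 0 := by rw [← sip_conj hA, hex, map_zero]
  have hq : starRingEnd ℂ q * q = ((‖q‖ ^ 2 : ℝ) : ℂ) := by
    rw [mul_comm, Complex.mul_conj, Complex.sq_norm]
  constructor
  · have hyy : sip A (starRingEnd ℂ q • x + (s : ℂ) • e) (starRingEnd ℂ q • x + (s : ℂ) • e)
        = ((‖q‖ ^ 2 + s ^ 2 : ℝ) : ℂ) := by
      simp only [sip_add_left, sip_add_right, sip_smul_left, sip_smul_right, sip_self_eq_one hA hx,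
        sip_self_eq_one hA he, hxe, hex, Complex.conj_conj, Complex.conj_ofReal]
      push_cast at hq ⊢
      linear_combination hq
    rw [normA, hyy, hs]
    simp
  · simp only [sip_add_right, sip_smul_right, sip_self_eq_one hA hx, hxe, Complex.conj_conj]
    ring

end Positive

section SelfAdjoint

variable {A T : H →L[ℂ] H}

lemma sip_apply_left (hA : A.IsPositive) (hsa : IsSelfAdjoint (A ∘L T)) (x y : H) :
    sip A (T x) y = sip A x (T y) := by
  have hA' : adjoint A = A := isSelfAdjoint_iff'.mp hA.isSelfAdjoint
  calc sip A (T x) y = ⟪y, (A ∘L T) x⟫_ℂ := rfl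
    _ = ⟪(A ∘L T) y, x⟫_ℂ := by
      rw [← adjoint_inner_right, isSelfAdjoint_iff'.mp hsa]
    _ = ⟪T y, A x⟫_ℂ := by rw [comp_apply, ← adjoint_inner_left, hA']
    _ = sip A x (T y) := rfl

lemma sip_pow_apply_left (hA : A.IsPositive) (hsa : IsSelfAdjoint (A ∘L T)) (n : ℕ) (x y : H) :
    sip A ((T ^ n) x) y = sip A x ((T ^ n) y) := by
  induction n generalizing x y with
  | zero => rfl
  | succ n ih =>
    rw [pow_succ, mul_apply_eq_comp, ih, sip_apply_left hA hsa, ← mul_apply_eq_comp, ← pow_succ',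
      pow_succ]

lemma normA_apply_le (hA : A.IsPositive) (hsa : IsSelfAdjoint (A ∘L T)) (x : H) :
    normA A (T x) ≤ ‖T‖ * normA A x := by
  obtain ⟨B, hB⟩ := hA.exists_eq_star_mul_self
  have hsq (n : ℕ) : normA A ((T ^ n) x) ^ 2 ≤ normA A x * normA A ((T ^ (2 * n)) x) := by
    have hself : sip A ((T ^ n) x) ((T ^ n) x) = sip A x ((T ^ (2 * n)) x) := by
      rw [sip_pow_apply_left hA hsa, two_mul, pow_add, mul_apply_eq_comp]
    have h := congrArg Complex.re (sip_self hA ((T ^ n) x))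
    rw [hself, Complex.ofReal_re] at h
    exact h ▸ (Complex.re_le_norm _).trans (norm_sip_le hA _ _)
  have hgrowth (n : ℕ) : normA A ((T ^ n) x) ≤ ‖B‖ * ‖x‖ * ‖T‖ ^ n := by
    have hpow : ‖(T ^ n) x‖ ≤ ‖T‖ ^ n * ‖x‖ := by
      rcases n.eq_zero_or_pos with rfl | hn
      · simp
      · exact ((T ^ n).le_opNorm x).trans (by gcongr; exact norm_pow_le' T hn)
    calc normA A ((T ^ n) x) = ‖B ((T ^ n) x)‖ := by rw [hB, normA_star_mul_self]
      _ ≤ ‖B‖ * (‖T‖ ^ n * ‖x‖) := (B.le_opNorm _).trans (by gcongr)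
      _ = ‖B‖ * ‖x‖ * ‖T‖ ^ n := by ring
  simpa using le_mul_of_sq_le_mul_double (fun n => normA_nonneg A ((T ^ n) x))
    (norm_nonneg T) hsq hgrowth

end SelfAdjoint

section NumericalRadius

variable {A T : H →L[ℂ] H}

/-- Polarization: `⟨T(u+v),u+v⟩_A - ⟨T(u-v),u-v⟩_A = 2(⟨Tu,v⟩_A + ⟨Tv,u⟩_A)`, and the two terms on
the right have the same real part because `T` is `A`-self-adjoint. -/
lemma four_mul_re_sip_apply_le (hA : A.IsPositive) (hsa : IsSelfAdjoint (A ∘L T)) {M : ℝ}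
    (hM : ∀ u, ‖sip A (T u) u‖ ≤ M * normA A u ^ 2) (u v : H) :
    4 * (sip A (T u) v).re ≤ 2 * M * (normA A u ^ 2 + normA A v ^ 2) := by
  have hpol : sip A (T (u + v)) (u + v) - sip A (T (u - v)) (u - v)
      = 2 * (sip A (T u) v + sip A (T v) u) := by
    simp only [map_add, map_sub, sip_add_left, sip_add_right, sip_sub_left, sip_sub_right]
    ring
  have hsymm : (sip A (T v) u).re = (sip A (T u) v).re := by
    rw [sip_apply_left hA hsa, ← sip_conj hA, Complex.conj_re]
  have hplus := (Complex.re_le_norm _).trans (hM (u + v))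
  have hminus := (neg_le_abs _).trans <| (Complex.abs_re_le_norm _).trans (hM (u - v))
  have hre : (sip A (T (u + v)) (u + v)).re - (sip A (T (u - v)) (u - v)).re
      = 4 * (sip A (T u) v).re := by
    rw [← Complex.sub_re, hpol, Complex.mul_re, Complex.add_re, Complex.add_im, hsymm]
    norm_num
    ring
  have hpar := congrArg (M * ·) (normA_add_sq_add_normA_sub_sq hA u v)
  linarith

lemma two_mul_norm_sip_apply_le (hA : A.IsPositive) (hsa : IsSelfAdjoint (A ∘L T)) {M : ℝ}
    (hM : ∀ u, ‖sip A (T u) u‖ ≤ M * normA A u ^ 2) (x y : H) :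
    2 * ‖sip A (T x) y‖ ≤ M * (normA A x ^ 2 + normA A y ^ 2) := by
  obtain ⟨c, hc, hcp⟩ := Complex.exists_norm_eq_mul_self (sip A (T x) y)
  have h := four_mul_re_sip_apply_le hA hsa hM (c • x) y
  rw [map_smul, sip_smul_left, ← hcp, Complex.ofReal_re, normA_smul hA, hc, one_mul] at h
  linarith

lemma norm_sip_le_wqA (hA : A.IsPositive) (hsa : IsSelfAdjoint (A ∘L T)) {x y : H} {q : ℂ}
    (hx : normA A x = 1) (hy : normA A y = 1) (hxy : sip A x y = q) :
    ‖sip A (T x) y‖ ≤ wqA A T q := by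
  refine le_csSup ⟨‖T‖, ?_⟩ ⟨x, y, hx, hy, hxy, rfl⟩
  rintro _ ⟨x, y, hx, hy, -, rfl⟩
  calc ‖sip A (T x) y‖ ≤ normA A (T x) * normA A y := norm_sip_le hA _ _
    _ ≤ ‖T‖ * normA A x * normA A y := by gcongr; exact normA_apply_le hA hsa x
    _ = ‖T‖ := by rw [hx, hy, mul_one, mul_one]

lemma wqA_nonneg (q : ℂ) : 0 ≤ wqA A T q :=
  Real.sSup_nonneg <| by rintro _ ⟨x, y, -, -, -, rfl⟩; exact norm_nonneg _

lemma wqA_le_of_forall {q : ℂ} {M : ℝ} (hM : 0 ≤ M)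
    (h : ∀ x y, normA A x = 1 → normA A y = 1 → sip A x y = q → ‖sip A (T x) y‖ ≤ M) :
    wqA A T q ≤ M :=
  Real.sSup_le (by rintro _ ⟨x, y, hx, hy, hxy, rfl⟩; exact h x y hx hy hxy) hM

lemma norm_sip_self_le_wqA_one (hA : A.IsPositive) (hsa : IsSelfAdjoint (A ∘L T)) (u : H) :
    ‖sip A (T u) u‖ ≤ wqA A T 1 * normA A u ^ 2 := by
  rcases (normA_nonneg A u).eq_or_lt with h0 | hpos
  · have := (norm_sip_le hA (T u) u).trans_eq (by rw [← h0, mul_zero])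
    rw [← h0]
    simpa using this
  · set c : ℂ := (((normA A u)⁻¹ : ℝ) : ℂ)
    have hc : ‖c‖ = (normA A u)⁻¹ := by simp [c, hpos.le]
    have hcu : normA A (c • u) = 1 := by rw [normA_smul hA, hc, inv_mul_cancel₀ hpos.ne']
    have h := norm_sip_le_wqA hA hsa hcu hcu (sip_self_eq_one hA hcu)
    rw [map_smul, sip_smul_left, sip_smul_right, norm_mul, norm_mul, Complex.norm_conj, hc,
      ← mul_assoc, ← sq, inv_pow, inv_mul_le_iff₀ (by positivity)] at h
    linarith

lemma norm_sip_le_wqA_one (hA : A.IsPositive) (hsa : IsSelfAdjoint (A ∘L T)) {x y : H}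
    (hx : normA A x = 1) (hy : normA A y = 1) : ‖sip A (T x) y‖ ≤ wqA A T 1 := by
  have := two_mul_norm_sip_apply_le hA hsa (norm_sip_self_le_wqA_one hA hsa) x y
  rw [hx, hy] at this
  linarith

lemma norm_mul_norm_sip_self_le_wqA (hA : A.IsPositive) (hsa : IsSelfAdjoint (A ∘L T))
    (hrank : 2 ≤ Module.rank ℂ (LinearMap.range (A : H →ₗ[ℂ] H))) {q : ℂ} (hq : ‖q‖ ≤ 1)
    {x : H} (hx : normA A x = 1) : ‖q‖ * ‖sip A (T x) x‖ ≤ wqA A T q := by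
  obtain ⟨e, he, hex⟩ := exists_normA_eq_one_sip_eq_zero hA hrank hx
  set s := √(1 - ‖q‖ ^ 2)
  have hs : s ^ 2 = 1 - ‖q‖ ^ 2 :=
    Real.sq_sqrt (by nlinarith [norm_nonneg q])
  obtain ⟨hy₁, hxy₁⟩ := normA_eq_one_and_sip_eq hA hx he hex hs
  obtain ⟨hy₂, hxy₂⟩ := normA_eq_one_and_sip_eq hA hx he hex (s := -s) (by rw [neg_sq, hs])
  have hsum : sip A (T x) (starRingEnd ℂ q • x + (s : ℂ) • e)
      + sip A (T x) (starRingEnd ℂ q • x + ((-s : ℝ) : ℂ) • e) = 2 * (q * sip A (T x) x) := by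
    simp only [sip_add_right, sip_smul_right, Complex.conj_conj, Complex.conj_ofReal]
    push_cast
    ring
  have htri := (norm_add_le _ _).trans
    (add_le_add (norm_sip_le_wqA hA hsa hx hy₁ hxy₁) (norm_sip_le_wqA hA hsa hx hy₂ hxy₂))
  rw [hsum, norm_mul, norm_mul, Complex.norm_two] at htri
  linarith

end NumericalRadius


theorem stmt0_general (A T : H →L[ℂ] H) (hA : A.IsPositive)
    (hrank : 2 ≤ Module.rank ℂ (LinearMap.range (A : H →ₗ[ℂ] H)))
    (hsa : IsSelfAdjoint (A ∘L T))
    (q : ℂ) (hq : ‖q‖ ≤ 1) :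
    ‖q‖ * wqA A T 1 ≤ wqA A T q ∧ wqA A T q ≤ wqA A T 1 := by
  refine ⟨?_, wqA_le_of_forall (wqA_nonneg 1) fun x y hx hy _ => norm_sip_le_wqA_one hA hsa hx hy⟩
  rcases (norm_nonneg q).eq_or_lt with hq0 | hqpos
  · rw [← hq0, zero_mul]
    exact wqA_nonneg q
  · rw [mul_comm, ← le_div_iff₀ hqpos]
    refine wqA_le_of_forall (div_nonneg (wqA_nonneg q) hqpos.le) fun x y hx hy hxy => ?_
    rw [le_div_iff₀ hqpos, sip_right_eq_of_sip_eq_one hA hx hy hxy, mul_comm]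
    exact norm_mul_norm_sip_self_le_wqA hA hsa hrank hq hx

theorem stmt0 (A T : H →L[ℂ] H) (hA : A.IsPositive)
    (hrank : 2 ≤ Module.rank ℂ (LinearMap.range (A : H →ₗ[ℂ] H)))
    (hadj : ∃ S : H →L[ℂ] H, ∀ x y : H, sip A (T x) y = sip A x (S y))
    (hsa : IsSelfAdjoint (A ∘L T))
    (q : ℂ) (hq : ‖q‖ ≤ 1) :
    ‖q‖ * wqA A T 1 ≤ wqA A T q ∧ wqA A T q ≤ wqA A T 1 :=
  stmt0_general A T hA hrank hsa q hq
end

section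
/- Let T be a bounded linear operator on a complex Hilbert space H with A = I (so the ordinary inner product), and let q ∈ (0,1). Then (q/2)·‖T‖ ≤ w_q(T) ≤ ‖T‖, where w_q(T) = sup{|⟨Tx,y⟩| : ‖x‖ = ‖y‖ = 1, ⟨x,y⟩ = q} is the q-numerical radius. -/
/-!
For a unit vector `x`, pick a unit vector `x'` orthogonal to `x` and a phase `c` aligning
`q ⟪x, T x⟫` with `c √(1 - q²) ⟪x', T x⟫`. Then `y = q x + c̄ √(1 - q²) x'` is a unit vector with
`⟪y, x⟫ = q` and `|⟪y, T x⟫| ≥ q |⟪x, T x⟫|`, so `w_q(T)` dominates `q` times the numerical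
radius, which by polarization is at least `‖T‖ / 2`. The upper bound is Cauchy–Schwarz.
-/

open scoped InnerProductSpace

variable {H : Type*} [NormedAddCommGroup H] [InnerProductSpace ℂ H] [CompleteSpace H]

/-- The `q`-numerical radius of a bounded operator `T`
(with the paper's convention `⟨x,y⟩ = ⟪y,x⟫`). -/
noncomputable def wq (T : H →L[ℂ] H) (q : ℂ) : ℝ :=
  sSup {r : ℝ | ∃ x y : H, ‖x‖ = 1 ∧ ‖y‖ = 1 ∧ (@inner ℂ H _ y x) = q ∧
    r = ‖(@inner ℂ H _ y (T x))‖}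

open ComplexConjugate

namespace Complex

theorem exists_norm_eq_one_norm_add_mul_eq (a b : ℂ) :
    ∃ c : ℂ, ‖c‖ = 1 ∧ ‖a + c * b‖ = ‖a‖ + ‖b‖ := by
  set c := exp ((arg a - arg b : ℝ) * I)
  have hc : c * exp (arg b * I) = exp (arg a * I) := by
    rw [← exp_add]; push_cast; ring_nf
  have hsum : a + c * b = ((‖a‖ + ‖b‖ : ℝ) : ℂ) * exp (arg a * I) := by
    push_cast
    linear_combination -(norm_mul_exp_arg_mul_I a) - c * norm_mul_exp_arg_mul_I b + ‖b‖ * hc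
  refine ⟨c, norm_exp_ofReal_mul_I _, ?_⟩
  rw [hsum, norm_mul, norm_exp_ofReal_mul_I, mul_one, norm_real,
    Real.norm_of_nonneg (by positivity)]

end Complex

section InnerProductSpace

variable {E : Type*} [NormedAddCommGroup E] [InnerProductSpace ℂ E]

theorem exists_norm_eq_one_inner_eq_zero (hdim : 2 ≤ Module.rank ℂ E) (x : E) :
    ∃ x' : E, ‖x'‖ = 1 ∧ ⟪x', x⟫_ℂ = 0 := by
  have hne : (ℂ ∙ x)ᗮ ≠ ⊥ := by
    rw [Ne, Submodule.orthogonal_eq_bot_iff]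
    intro htop
    have := (rank_span_le (R := ℂ) {x}).trans_eq' (by rw [htop, rank_top])
    rw [Cardinal.mk_singleton] at this
    exact absurd (hdim.trans this) (by norm_num)
  obtain ⟨v, hv, hv0⟩ := Submodule.ne_bot_iff _ |>.mp hne
  refine ⟨(‖v‖⁻¹ : ℂ) • v, by simp [norm_smul, hv0], ?_⟩
  rw [inner_smul_left, inner_eq_zero_symm.mp (hv x (Submodule.mem_span_singleton_self x)), mul_zero]

theorem exists_norm_eq_one_inner_eq_ofReal_and_mul_norm_inner_le
    (hdim : 2 ≤ Module.rank ℂ E) {x : E} (hx : ‖x‖ = 1) {q : ℝ} (hq0 : 0 ≤ q) (hq1 : q ≤ 1)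
    (v : E) : ∃ y : E, ‖y‖ = 1 ∧ ⟪y, x⟫_ℂ = q ∧ q * ‖⟪x, v⟫_ℂ‖ ≤ ‖⟪y, v⟫_ℂ‖ := by
  obtain ⟨x', hx', hx'x⟩ := exists_norm_eq_one_inner_eq_zero hdim x
  obtain ⟨s, hs0, hs⟩ : ∃ s : ℝ, 0 ≤ s ∧ s ^ 2 = 1 - q ^ 2 :=
    ⟨√(1 - q ^ 2), Real.sqrt_nonneg _, Real.sq_sqrt (by nlinarith)⟩
  obtain ⟨c, hc, hcv⟩ :=
    Complex.exists_norm_eq_one_norm_add_mul_eq (q * ⟪x, v⟫_ℂ) (s * ⟪x', v⟫_ℂ)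
  refine ⟨(q : ℂ) • x + (conj c * s) • x', ?_, ?_, ?_⟩
  · have horth : ⟪(q : ℂ) • x, (conj c * s) • x'⟫_ℂ = 0 := by
      rw [inner_smul_left, inner_smul_right, inner_eq_zero_symm.mp hx'x, mul_zero, mul_zero]
    have := norm_add_sq_eq_norm_sq_add_norm_sq_of_inner_eq_zero _ _ horth
    simp only [norm_smul, norm_mul, Complex.norm_conj, Complex.norm_real, hc, hx, hx',
      Real.norm_of_nonneg hq0, Real.norm_of_nonneg hs0] at this
    nlinarith [norm_nonneg ((q : ℂ) • x + (conj c * s) • x')]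
  · simp [hx'x, inner_self_eq_norm_sq_to_K, hx]
  · have : ⟪(q : ℂ) • x + (conj c * s) • x', v⟫_ℂ = q * ⟪x, v⟫_ℂ + c * (s * ⟪x', v⟫_ℂ) := by
      simp only [inner_add_left, inner_smul_left, map_mul, Complex.conj_conj, Complex.conj_ofReal]
      ring
    rw [this, hcv, norm_mul, Complex.norm_real, Real.norm_of_nonneg hq0]
    exact le_add_of_nonneg_right (norm_nonneg _)

theorem norm_inner_self_map_le_of_forall_norm_eq_one (T : E →L[ℂ] E) {M : ℝ}
    (hM : ∀ x : E, ‖x‖ = 1 → ‖⟪x, T x⟫_ℂ‖ ≤ M) (z : E) : ‖⟪z, T z⟫_ℂ‖ ≤ M * ‖z‖ ^ 2 := by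
  rcases eq_or_ne z 0 with rfl | hz
  · simp
  have h := hM ((‖z‖⁻¹ : ℂ) • z) (by simp [norm_smul, hz])
  simp only [map_smul, inner_smul_left, inner_smul_right, norm_mul, norm_inv, Complex.norm_conj,
    Complex.norm_real, norm_norm] at h
  calc ‖⟪z, T z⟫_ℂ‖ = ‖z‖ ^ 2 * (‖z‖⁻¹ * (‖z‖⁻¹ * ‖⟪z, T z⟫_ℂ‖)) := by field_simp
    _ ≤ ‖z‖ ^ 2 * M := by gcongr
    _ = M * ‖z‖ ^ 2 := mul_comm _ _

theorem norm_inner_map_le_of_forall_norm_inner_self_le (T : E →ₗ[ℂ] E) {M : ℝ}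
    (hM : ∀ z : E, ‖⟪T z, z⟫_ℂ‖ ≤ M * ‖z‖ ^ 2) (u v : E) :
    ‖⟪T v, u⟫_ℂ‖ ≤ M * (‖u‖ ^ 2 + ‖v‖ ^ 2) := by
  have hpar (w : E) : ‖u + w‖ ^ 2 + ‖u - w‖ ^ 2 = 2 * (‖u‖ ^ 2 + ‖w‖ ^ 2) := by
    simpa only [sq] using parallelogram_law_with_norm ℂ u w
  have hIv : ‖Complex.I • v‖ = ‖v‖ := by rw [norm_smul, Complex.norm_I, one_mul]
  have htri (a b c d : ℂ) :
      ‖a - b + Complex.I * c - Complex.I * d‖ ≤ ‖a‖ + ‖b‖ + ‖c‖ + ‖d‖ := by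
    calc _ ≤ ‖a - b + Complex.I * c‖ + ‖Complex.I * d‖ := norm_sub_le _ _
      _ ≤ ‖a - b‖ + ‖Complex.I * c‖ + ‖Complex.I * d‖ := by gcongr; exact norm_add_le _ _
      _ ≤ ‖a‖ + ‖b‖ + ‖Complex.I * c‖ + ‖Complex.I * d‖ := by gcongr; exact norm_sub_le _ _
      _ = _ := by simp only [norm_mul, Complex.norm_I, one_mul]
  rw [inner_map_polarization, norm_div, Complex.norm_ofNat]
  calc _ ≤ (M * ‖u + v‖ ^ 2 + M * ‖u - v‖ ^ 2 + M * ‖u + Complex.I • v‖ ^ 2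
        + M * ‖u - Complex.I • v‖ ^ 2) / 4 := by
        gcongr
        exact (htri _ _ _ _).trans (by gcongr <;> exact hM _)
    _ = M * (‖u‖ ^ 2 + ‖v‖ ^ 2) := by
        have hIpar := hpar (Complex.I • v)
        rw [hIv] at hIpar
        linear_combination (M / 4) * (hpar v + hIpar)

theorem opNorm_le_two_mul_of_forall_norm_inner_self_le [Nontrivial E] (T : E →L[ℂ] E) {M : ℝ}
    (hM : ∀ x : E, ‖x‖ = 1 → ‖⟪x, T x⟫_ℂ‖ ≤ M) : ‖T‖ ≤ 2 * M := by
  have hM0 : 0 ≤ M := by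
    obtain ⟨x, hx⟩ := exists_norm_eq E zero_le_one
    exact (norm_nonneg _).trans (hM x hx)
  have hquad (z : E) : ‖⟪T z, z⟫_ℂ‖ ≤ M * ‖z‖ ^ 2 := by
    rw [norm_inner_symm]; exact norm_inner_self_map_le_of_forall_norm_eq_one T hM z
  refine T.opNorm_le_of_unit_norm (by positivity) fun v hv => ?_
  rcases eq_or_ne (T v) 0 with h | h
  · rw [h, norm_zero]; positivity
  have hu : ‖(‖T v‖⁻¹ : ℂ) • T v‖ = 1 := by simp [norm_smul, h]
  have := norm_inner_map_le_of_forall_norm_inner_self_le (T : E →ₗ[ℂ] E) hquad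
    ((‖T v‖⁻¹ : ℂ) • T v) v
  rw [hu, hv, ContinuousLinearMap.coe_coe, inner_smul_right, inner_self_eq_norm_sq_to_K] at this
  simp only [norm_mul, norm_inv, norm_pow, Complex.norm_real, RCLike.norm_ofReal, abs_norm,
    norm_norm, one_pow] at this
  rw [sq, inv_mul_cancel_left₀ (norm_ne_zero_iff.mpr h)] at this
  linarith

theorem norm_inner_map_le_opNorm (T : E →L[ℂ] E) {x y : E} (hx : ‖x‖ = 1) (hy : ‖y‖ = 1) :
    ‖⟪y, T x⟫_ℂ‖ ≤ ‖T‖ := by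
  simpa [hx, hy] using (norm_inner_le_norm y (T x)).trans
    (mul_le_mul_of_nonneg_left (T.le_opNorm x) (norm_nonneg y))

theorem norm_inner_map_le_wq (T : E →L[ℂ] E) {q : ℂ} {x y : E} (hx : ‖x‖ = 1) (hy : ‖y‖ = 1)
    (hyx : ⟪y, x⟫_ℂ = q) : ‖⟪y, T x⟫_ℂ‖ ≤ wq T q :=
  le_csSup ⟨‖T‖, by rintro _ ⟨x, y, hx, hy, -, rfl⟩; exact norm_inner_map_le_opNorm T hx hy⟩
    ⟨x, y, hx, hy, hyx, rfl⟩

theorem wq_le_opNorm (T : E →L[ℂ] E) (q : ℂ) : wq T q ≤ ‖T‖ :=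
  Real.sSup_le (by rintro _ ⟨x, y, hx, hy, -, rfl⟩; exact norm_inner_map_le_opNorm T hx hy)
    (norm_nonneg T)

end InnerProductSpace

theorem stmt2 (hdim : 2 ≤ Module.rank ℂ H) (T : H →L[ℂ] H)
    (q : ℝ) (hq : q ∈ Set.Ioo (0 : ℝ) 1) :
    q / 2 * ‖T‖ ≤ wq T (q : ℂ) ∧ wq T (q : ℂ) ≤ ‖T‖ := by
  obtain ⟨hq0, hq1⟩ := hq
  have : Nontrivial H := rank_pos_iff_nontrivial.mp (lt_of_lt_of_le (by norm_num) hdim)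
  have hnum : ∀ x : H, ‖x‖ = 1 → ‖⟪x, T x⟫_ℂ‖ ≤ wq T q / q := by
    intro x hx
    obtain ⟨y, hy, hyx, hle⟩ :=
      exists_norm_eq_one_inner_eq_ofReal_and_mul_norm_inner_le hdim hx hq0.le hq1.le (T x)
    rw [le_div_iff₀ hq0, mul_comm]
    exact hle.trans (norm_inner_map_le_wq T hx hy hyx)
  refine ⟨?_, wq_le_opNorm T q⟩
  calc q / 2 * ‖T‖ ≤ q / 2 * (2 * (wq T q / q)) := by
        gcongr; exact opNorm_le_two_mul_of_forall_norm_inner_self_le T hnum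
    _ = wq T q := by field_simp
end

section
/- Let T ∈ B_A(H) and q a complex number with |q| ≤ 1. Then w_{q,A}(T) ≤ ( |q|²·w_A(T)² + (1−|q|²)·‖T‖_A² + 2|q|√(1−|q|²)·w_A(T)·‖T‖_A )^{1/2}, where w_A is the A-numerical radius (the case q = 1). -/
open scoped InnerProductSpace

variable {H : Type*} [NormedAddCommGroup H] [InnerProductSpace ℂ H] [CompleteSpace H]

/-- The `A`-numerical radius `w_A(T) = sup {|⟨Tx,x⟩_A| : ‖x‖_A = 1}`. -/
noncomputable def wA (A T : H →L[ℂ] H) : ℝ :=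
  sSup {r : ℝ | ∃ x : H, normA A x = 1 ∧ r = ‖sip A (T x) x‖}

/-! Write `A = R ^ 2` with `R = √A`, so that `⟨x, y⟩_A = ⟪R y, R x⟫` and everything happens in `H`.
For `A`-unit vectors `x, y` with `⟨x, y⟩_A = q`, split `R y` into its component along `R x` and an
orthogonal part of norm `√(1 - |q|²)`; this gives
`|⟨T x, y⟩_A| ≤ |q| |⟨T x, x⟩_A| + √(1 - |q|²) ‖T x‖_A ≤ |q| w_A(T) + √(1 - |q|²) ‖T‖_A`,
whose square is the radicand in the theorem.

The suprema defining `w_A(T)` and `‖T‖_A` are finite because an operator with an `A`-adjoint `S`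
is `A`-bounded: `M = S T` is `A`-symmetric, so `‖R Mᵏ x‖² ≤ ‖R M²ᵏ x‖ ‖R x‖`, and iterating this
along `k = 2ⁿ` against the trivial growth `‖R Mᵏ x‖ ≤ ‖R‖ ‖M‖ᵏ ‖x‖` forces
`‖R M x‖ ≤ ‖M‖ ‖R x‖`. -/

section
variable {g : ℕ → ℝ}

lemma pow_two_pow_le_of_sq_le (hg : ∀ k, 0 ≤ g k) (hsq : ∀ k, g k ^ 2 ≤ g (2 * k)) (n : ℕ) :
    g 1 ^ 2 ^ n ≤ g (2 ^ n) := by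
  induction n with
  | zero => simp
  | succ n ih =>
    calc g 1 ^ 2 ^ (n + 1) = (g 1 ^ 2 ^ n) ^ 2 := by rw [pow_succ, pow_mul]
      _ ≤ g (2 ^ n) ^ 2 := pow_le_pow_left₀ (pow_nonneg (hg 1) _) ih 2
      _ ≤ g (2 * 2 ^ n) := hsq _
      _ = g (2 ^ (n + 1)) := by rw [pow_succ']

lemma le_one_of_forall_pow_two_pow_le {r B : ℝ} (h : ∀ n, r ^ 2 ^ n ≤ B) : r ≤ 1 := by
  by_contra! hr
  obtain ⟨n, hn⟩ := pow_unbounded_of_one_lt B hr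
  exact (hn.trans_le ((pow_le_pow_right₀ hr.le Nat.lt_two_pow_self.le).trans (h n))).false

lemma le_mul_of_sq_le_mul_of_le_pow {m C : ℝ} (hg : ∀ k, 0 ≤ g k)
    (hsq : ∀ k, g k ^ 2 ≤ g (2 * k) * g 0) (hm : 0 ≤ m) (hgrow : ∀ k, g k ≤ C * m ^ k) :
    g 1 ≤ m * g 0 := by
  rcases (hg 0).eq_or_lt with h0 | h0
  · have h1 := hsq 1
    rw [← h0, mul_zero] at h1 ⊢
    nlinarith [hg 1]
  rcases hm.eq_or_lt with hm0 | hm0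
  · simpa [← hm0] using hgrow 1
  have hsq' : ∀ k, (g k / g 0) ^ 2 ≤ g (2 * k) / g 0 := fun k => by
    rw [div_pow, div_le_div_iff₀ (by positivity) h0]
    nlinarith [hsq k]
  have hratio : g 1 / (m * g 0) ≤ 1 := le_one_of_forall_pow_two_pow_le (B := C / g 0) fun n =>
    calc (g 1 / (m * g 0)) ^ 2 ^ n = (g 1 / g 0) ^ 2 ^ n / m ^ 2 ^ n := by
          rw [mul_comm, ← div_div, div_pow]
      _ ≤ g (2 ^ n) / g 0 / m ^ 2 ^ n := by
          gcongr
          exact pow_two_pow_le_of_sq_le (g := fun k => g k / g 0)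
            (fun k => div_nonneg (hg k) h0.le) hsq' n
      _ ≤ C * m ^ 2 ^ n / g 0 / m ^ 2 ^ n := by gcongr; exact hgrow _
      _ = C / g 0 := by field_simp
  rwa [div_le_one (by positivity)] at hratio

end

section
variable {𝕜 E F : Type*} [RCLike 𝕜] [NormedAddCommGroup E] [InnerProductSpace 𝕜 E]
  [NormedAddCommGroup F] [InnerProductSpace 𝕜 F] {R : E →L[𝕜] F}

lemma norm_inner_le_of_norm_eq_one {u v : F} (hu : ‖u‖ = 1) (hv : ‖v‖ = 1) (w : F) :
    ‖⟪v, w⟫_𝕜‖ ≤ ‖⟪v, u⟫_𝕜‖ * ‖⟪u, w⟫_𝕜‖ + √(1 - ‖⟪v, u⟫_𝕜‖ ^ 2) * ‖w‖ := by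
  set c := ⟪u, v⟫_𝕜
  have hc : ‖⟪v, u⟫_𝕜‖ = ‖c‖ := norm_inner_symm v u
  have horth : ⟪u, v - c • u⟫_𝕜 = 0 := by
    rw [inner_sub_right, inner_smul_right, inner_self_eq_norm_sq_to_K, hu]; simp [c]
  have hperp : ‖v - c • u‖ = √(1 - ‖c‖ ^ 2) := by
    have := norm_add_sq_eq_norm_sq_add_norm_sq_of_inner_eq_zero (𝕜 := 𝕜) (v - c • u) (c • u)
      (by rw [inner_smul_right, inner_eq_zero_symm.mp horth, mul_zero])
    rw [sub_add_cancel, hv, norm_smul, hu, mul_one] at this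
    rw [← Real.sqrt_mul_self (norm_nonneg (v - c • u))]
    congr 1
    linarith
  have hdecomp : ⟪v, w⟫_𝕜 = ⟪v - c • u, w⟫_𝕜 + starRingEnd 𝕜 c * ⟪u, w⟫_𝕜 := by
    rw [inner_sub_left, inner_smul_left, sub_add_cancel]
  calc ‖⟪v, w⟫_𝕜‖ ≤ ‖⟪v - c • u, w⟫_𝕜‖ + ‖c‖ * ‖⟪u, w⟫_𝕜‖ := by
        rw [hdecomp]; exact (norm_add_le _ _).trans (by rw [norm_mul, RCLike.norm_conj])
    _ ≤ √(1 - ‖c‖ ^ 2) * ‖w‖ + ‖c‖ * ‖⟪u, w⟫_𝕜‖ := by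
        gcongr; exact (norm_inner_le_norm _ _).trans (by rw [hperp])
    _ = _ := by rw [hc]; ring

lemma inner_map_iterate_symm {M : E →L[𝕜] E} (hM : ∀ x y, ⟪R y, R (M x)⟫_𝕜 = ⟪R (M y), R x⟫_𝕜)
    (n : ℕ) (x y : E) : ⟪R y, R (M^[n] x)⟫_𝕜 = ⟪R (M^[n] y), R x⟫_𝕜 := by
  induction n generalizing x with
  | zero => rfl
  | succ n ih => rw [Function.iterate_succ_apply, ih, hM, ← Function.iterate_succ_apply' M]

lemma norm_map_apply_le_of_inner_symm {M : E →L[𝕜] E}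
    (hM : ∀ x y, ⟪R y, R (M x)⟫_𝕜 = ⟪R (M y), R x⟫_𝕜) (x : E) : ‖R (M x)‖ ≤ ‖M‖ * ‖R x‖ := by
  have hsq (k : ℕ) : ‖R (M^[k] x)‖ ^ 2 ≤ ‖R (M^[2 * k] x)‖ * ‖R x‖ := by
    rw [← inner_self_eq_norm_sq (𝕜 := 𝕜), inner_map_iterate_symm hM, ← Function.iterate_add_apply,
      ← two_mul]
    exact re_inner_le_norm _ _
  have hgrow (k : ℕ) : ‖R (M^[k] x)‖ ≤ ‖R‖ * ‖x‖ * ‖M‖ ^ k :=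
    calc ‖R (M^[k] x)‖ ≤ ‖R‖ * (‖M‖ ^ k * ‖x‖) := by
          grw [R.le_opNorm, (M.lipschitz.iterate k).norm_le_mul (by simp) x]
          simp
      _ = ‖R‖ * ‖x‖ * ‖M‖ ^ k := by ring
  simpa using le_mul_of_sq_le_mul_of_le_pow (g := fun k => ‖R (M^[k] x)‖)
    (fun _ => norm_nonneg _) hsq (norm_nonneg M) hgrow

lemma norm_map_apply_le_of_inner_adjoint {T S : E →L[𝕜] E}
    (h : ∀ x y, ⟪R y, R (T x)⟫_𝕜 = ⟪R (S y), R x⟫_𝕜) (x : E) :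
    ‖R (T x)‖ ≤ √‖S ∘L T‖ * ‖R x‖ := by
  have h' (x y : E) : ⟪R y, R (S x)⟫_𝕜 = ⟪R (T y), R x⟫_𝕜 := by
    rw [← inner_conj_symm, ← h, inner_conj_symm]
  have hsymm (x y : E) : ⟪R y, R ((S ∘L T) x)⟫_𝕜 = ⟪R ((S ∘L T) y), R x⟫_𝕜 := by
    rw [ContinuousLinearMap.comp_apply, h', ContinuousLinearMap.comp_apply,
      ← inner_conj_symm (R (S _)), h', inner_conj_symm]
  have hsq : ‖R (T x)‖ ^ 2 ≤ (√‖S ∘L T‖ * ‖R x‖) ^ 2 :=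
    calc ‖R (T x)‖ ^ 2 = RCLike.re ⟪R ((S ∘L T) x), R x⟫_𝕜 := by
          rw [← inner_self_eq_norm_sq (𝕜 := 𝕜), h]; rfl
      _ ≤ ‖R ((S ∘L T) x)‖ * ‖R x‖ := re_inner_le_norm _ _
      _ ≤ ‖S ∘L T‖ * ‖R x‖ * ‖R x‖ := by gcongr; exact norm_map_apply_le_of_inner_symm hsymm x
      _ = (√‖S ∘L T‖ * ‖R x‖) ^ 2 := by rw [mul_pow, Real.sq_sqrt (norm_nonneg _)]; ring
  exact pow_le_pow_iff_left₀ (norm_nonneg _) (by positivity) two_ne_zero |>.mp hsq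

end

section
variable {A : H →L[ℂ] H}

lemma sip_eq_inner_sqrt (hA : A.IsPositive) (x y : H) :
    sip A x y = ⟪CFC.sqrt A y, CFC.sqrt A x⟫_ℂ := by
  have hA0 : 0 ≤ A := A.nonneg_iff_isPositive.mpr hA
  rw [sip]
  conv_lhs => rw [← CFC.sqrt_mul_sqrt_self A]
  rw [mul_apply_eq_comp, ← ContinuousLinearMap.adjoint_inner_left,
    (CFC.sqrt_nonneg A).isSelfAdjoint.adjoint_eq]

lemma normA_eq_norm_sqrt (hA : A.IsPositive) (x : H) : normA A x = ‖CFC.sqrt A x‖ := by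
  rw [normA, sip_eq_inner_sqrt hA, ← Real.sqrt_sq (norm_nonneg (CFC.sqrt A x))]
  exact congrArg Real.sqrt (inner_self_eq_norm_sq (𝕜 := ℂ) _)

lemma sqrt_apply_eq_zero_iff (hA : A.IsPositive) {x : H} : CFC.sqrt A x = 0 ↔ A x = 0 := by
  have hA0 : 0 ≤ A := A.nonneg_iff_isPositive.mpr hA
  refine ⟨fun h => ?_, fun h => ?_⟩
  · rw [← CFC.sqrt_mul_sqrt_self A, mul_apply_eq_comp, h, map_zero]
  · rw [← norm_eq_zero, ← normA_eq_norm_sqrt hA, normA, sip, h, inner_zero_right]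
    simp

lemma mem_closure_range_iff_mem_orthogonal_ker (hA : IsSelfAdjoint A) {z : H} :
    z ∈ closure (Set.range fun v => A v) ↔ z ∈ (LinearMap.ker (A : H →ₗ[ℂ] H))ᗮ := by
  rw [ContinuousLinearMap.orthogonal_ker, hA.adjoint_eq, ← SetLike.mem_coe,
    Submodule.topologicalClosure_coe]
  rfl

lemma exists_mem_closure_range_sqrt_apply_eq (hA : A.IsPositive) (x : H) :
    ∃ z ∈ closure (Set.range fun v => A v), CFC.sqrt A z = CFC.sqrt A x := by
  obtain ⟨y, hy, z, hz, rfl⟩ := (LinearMap.ker (A : H →ₗ[ℂ] H)).exists_add_mem_mem_orthogonal x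
  refine ⟨z, (mem_closure_range_iff_mem_orthogonal_ker hA.isSelfAdjoint).mpr hz, ?_⟩
  rw [map_add, (sqrt_apply_eq_zero_iff hA).mpr hy, zero_add]

lemma eq_zero_of_mem_closure_range_of_sqrt_apply_eq_zero (hA : A.IsPositive) {z : H}
    (hz : z ∈ closure (Set.range fun v => A v)) (h : CFC.sqrt A z = 0) : z = 0 :=
  Submodule.inner_right_of_mem_orthogonal ((sqrt_apply_eq_zero_iff hA).mp h)
    ((mem_closure_range_iff_mem_orthogonal_ker hA.isSelfAdjoint).mp hz) |> inner_self_eq_zero.mp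

lemma normA_apply_le_of_sip_adjoint (hA : A.IsPositive) {T S : H →L[ℂ] H}
    (hS : ∀ x y, sip A (T x) y = sip A x (S y)) (x : H) :
    normA A (T x) ≤ √‖S ∘L T‖ * normA A x := by
  simp only [normA_eq_norm_sqrt hA]
  exact norm_map_apply_le_of_inner_adjoint
    (fun x y => by simpa only [sip_eq_inner_sqrt hA] using hS x y) x

variable {T : H →L[ℂ] H} {K : ℝ}

lemma norm_sip_le_wA (hA : A.IsPositive) (hT : ∀ x, normA A (T x) ≤ K * normA A x) {x : H}
    (hx : normA A x = 1) : ‖sip A (T x) x‖ ≤ wA A T := by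
  refine le_csSup ⟨K, ?_⟩ ⟨x, hx, rfl⟩
  rintro _ ⟨y, hy, rfl⟩
  calc ‖sip A (T y) y‖ ≤ normA A y * normA A (T y) := by
        rw [sip_eq_inner_sqrt hA, normA_eq_norm_sqrt hA, normA_eq_norm_sqrt hA]
        exact norm_inner_le_norm _ _
    _ ≤ normA A y * (K * normA A y) := mul_le_mul_of_nonneg_left (hT y) (Real.sqrt_nonneg _)
    _ = K := by rw [hy]; ring

lemma normA_le_opNormA (hA : A.IsPositive) (hT : ∀ x, normA A (T x) ≤ K * normA A x) {x : H}
    (hx : normA A x = 1) : normA A (T x) ≤ opNormA A T := by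
  -- `opNormA` only tests vectors of `closure (range A)`; moving `x` there changes neither
  -- `√A x` nor, by `A`-boundedness, `√A (T x)`.
  obtain ⟨z, hz, hRz⟩ := exists_mem_closure_range_sqrt_apply_eq hA x
  have hzx : normA A z = normA A x := by rw [normA_eq_norm_sqrt hA, normA_eq_norm_sqrt hA, hRz]
  have hTzx : CFC.sqrt A (T z) = CFC.sqrt A (T x) := by
    have h : normA A (T (x - z)) ≤ 0 := (hT _).trans_eq <| by
      rw [normA_eq_norm_sqrt hA, map_sub, hRz, sub_self, norm_zero, mul_zero]
    rw [normA_eq_norm_sqrt hA, norm_le_zero_iff, map_sub, map_sub, sub_eq_zero] at h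
    exact h.symm
  have hz0 : z ≠ 0 := by
    rintro rfl
    rw [hx, normA_eq_norm_sqrt hA, map_zero, norm_zero] at hzx
    exact zero_ne_one hzx
  have hbdd : BddAbove {r : ℝ | ∃ x ∈ closure (Set.range fun v => A v), x ≠ 0 ∧
      r = normA A (T x) / normA A x} := by
    refine ⟨K, ?_⟩
    rintro _ ⟨w, hw, hw0, rfl⟩
    have hpos : 0 < normA A w := by
      rw [normA_eq_norm_sqrt hA, norm_pos_iff]
      exact fun h => hw0 (eq_zero_of_mem_closure_range_of_sqrt_apply_eq_zero hA hw h)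
    exact (div_le_iff₀ hpos).mpr (hT w)
  calc normA A (T x) = normA A (T z) / normA A z := by
        rw [hzx, hx, div_one, normA_eq_norm_sqrt hA, normA_eq_norm_sqrt hA, hTzx]
    _ ≤ opNormA A T := le_csSup hbdd ⟨z, hz, hz0, rfl⟩

lemma norm_sip_apply_le (hA : A.IsPositive) (hT : ∀ x, normA A (T x) ≤ K * normA A x)
    {x y : H} (hx : normA A x = 1) (hy : normA A y = 1) :
    ‖sip A (T x) y‖ ≤ ‖sip A x y‖ * wA A T + √(1 - ‖sip A x y‖ ^ 2) * opNormA A T := by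
  have h := norm_inner_le_of_norm_eq_one (𝕜 := ℂ) ((normA_eq_norm_sqrt hA x).symm.trans hx)
    ((normA_eq_norm_sqrt hA y).symm.trans hy) (CFC.sqrt A (T x))
  simp only [← sip_eq_inner_sqrt hA, ← normA_eq_norm_sqrt hA] at h
  refine h.trans ?_
  gcongr
  exacts [norm_sip_le_wA hA hT hx, normA_le_opNormA hA hT hx]

end

theorem stmt5_general (A T : H →L[ℂ] H) (hA : A.IsPositive)
    (hadj : ∃ S : H →L[ℂ] H, ∀ x y : H, sip A (T x) y = sip A x (S y))
    (q : ℂ) (hq : ‖q‖ ≤ 1) :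
    wqA A T q ≤
      Real.sqrt (‖q‖ ^ 2 * (wA A T) ^ 2 + (1 - ‖q‖ ^ 2) * (opNormA A T) ^ 2 +
        2 * ‖q‖ * Real.sqrt (1 - ‖q‖ ^ 2) * wA A T * opNormA A T) := by
  obtain ⟨S, hS⟩ := hadj
  have hq2 : 0 ≤ 1 - ‖q‖ ^ 2 := by nlinarith [norm_nonneg q]
  have hsq : ‖q‖ ^ 2 * (wA A T) ^ 2 + (1 - ‖q‖ ^ 2) * (opNormA A T) ^ 2 +
      2 * ‖q‖ * √(1 - ‖q‖ ^ 2) * wA A T * opNormA A T =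
      (‖q‖ * wA A T + √(1 - ‖q‖ ^ 2) * opNormA A T) ^ 2 := by
    rw [add_sq, mul_pow, mul_pow, Real.sq_sqrt hq2]
    ring
  rw [hsq, Real.sqrt_sq_eq_abs]
  refine Real.sSup_le ?_ (abs_nonneg _)
  rintro _ ⟨x, y, hx, hy, rfl, rfl⟩
  exact (norm_sip_apply_le hA (normA_apply_le_of_sip_adjoint hA hS) hx hy).trans (le_abs_self _)

theorem stmt5 (A T : H →L[ℂ] H) (hA : A.IsPositive)
    (hrank : 2 ≤ Module.rank ℂ (LinearMap.range (A : H →ₗ[ℂ] H)))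
    (hadj : ∃ S : H →L[ℂ] H, ∀ x y : H, sip A (T x) y = sip A x (S y))
    (q : ℂ) (hq : ‖q‖ ≤ 1) :
    wqA A T q ≤
      Real.sqrt (‖q‖ ^ 2 * (wA A T) ^ 2 + (1 - ‖q‖ ^ 2) * (opNormA A T) ^ 2 +
        2 * ‖q‖ * Real.sqrt (1 - ‖q‖ ^ 2) * wA A T * opNormA A T) :=
  stmt5_general A T hA hadj q hq
end
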